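/- For every real number y, one has 2 + y^2 - 2y·sin(y) - 2cos(y) ≥ y^4 / (4(1 + y^2)). -/
import Mathlib

theorem trig_lower_bound (y : ℝ) :
    2 + y ^ 2 - 2 * y * Real.sin y - 2 * Real.cos y ≥ y ^ 4 / (4 * (1 + y ^ 2)) := by
  set s := Real.sin y
  set c := Real.cos y
  have hsc : s ^ 2 + c ^ 2 = 1 := by rw [add_comm]; exact Real.cos_sq_add_sin_sq y
  set r := Real.sqrt (1 + y ^ 2) with hr
  have hr2 : r ^ 2 = 1 + y ^ 2 := Real.sq_sqrt (by positivity)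
  have hr1 : 1 ≤ r := by nlinarith [Real.sqrt_nonneg (1 + y ^ 2)]
  have hcs : y * s + c ≤ r := by nlinarith [sq_nonneg (y * c - s), sq_nonneg (y * s + c - r)]
  have hpos : (0:ℝ) < 4 * (1 + y ^ 2) := by positivity
  rw [ge_iff_le, div_le_iff₀ hpos]
  nlinarith [sq_nonneg (r - 1), sq_nonneg ((r - 1) * (r + 1)), mul_pos hpos hpos]
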